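/- arXiv:1410.2446 — 2 statements merged into one kernel-verified Lean document; each statement's English description precedes it below -/
import Mathlib

section
/- The following identity holds in R_l: χ(l−1,0)·χ(l−1,2) = χ(l−2,2)·Z + 1 + χ(l−2,2)². (Lemma 2.6: the (l−1)-st equation of the T-system for ε-characters acquires the extra term χ(l−2,2)²; it is the generalised exchange relation of the cluster algebra 𝒜_{l−1}.) -/
/-!
`Rl l` is the Laurent polynomial ring over `ℤ` in `l` commuting variables
`Y_0, Y_2, …, Y_{2l−2}`, with the index of `Y` read modulo `2l`.  It is realised
as the group algebra of the free abelian group `ZMod l →₀ ℤ`, the variable with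
even index `n` corresponding to the residue `n/2` modulo `l`.
-/

/-- The Laurent polynomial ring `ℤ[Y_0^{±1}, Y_2^{±1}, …, Y_{2l−2}^{±1}]`,
indices read modulo `2l`. -/
abbrev Rl (l : ℕ) : Type := AddMonoidAlgebra ℤ (ZMod l →₀ ℤ)

/-- The monomial `Y_n^e` (for `n` an even integer, read modulo `2l`). -/
noncomputable def Y (l : ℕ) (n e : ℤ) : Rl l :=
  AddMonoidAlgebra.single (Finsupp.single ((n / 2 : ℤ) : ZMod l) e) 1

/-- The `ε`-character `χ(k,a)` of the Kirillov–Reshetikhin module `W_ε(k,ε^a)`: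
`χ(k,a) = Σ_{i=0}^{k} (Π_{t=0}^{k−1−i} Y_{a+2t}) · (Π_{t=k+1−i}^{k} Y_{a+2t}^{−1})`. -/
noncomputable def chi (l : ℕ) (k : ℕ) (a : ℤ) : Rl l :=
  ∑ i ∈ Finset.range (k + 1),
    (∏ t ∈ Finset.range (k - i), Y l (a + 2 * (t : ℤ)) 1) *
      ∏ t ∈ Finset.Icc (k + 1 - i) k, Y l (a + 2 * (t : ℤ)) (-1)

/-- `Z = Y_0Y_2⋯Y_{2l−2} + (Y_0Y_2⋯Y_{2l−2})^{−1}`, the `ε`-character of the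
Frobenius pullback `z₁ = L(𝐘₁)`. -/
noncomputable def Z (l : ℕ) : Rl l :=
  (∏ t ∈ Finset.range l, Y l (2 * (t : ℤ)) 1) +
    ∏ t ∈ Finset.range l, Y l (2 * (t : ℤ)) (-1)

/-!
The T-system `χ(k+1,a)·χ(k+1,a+2) = χ(k+2,a)·χ(k,a+2) + 1` holds in `R_l` for every `k`: peeling
off the first `Y` of each monomial, or its last `Y⁻¹`, gives two recursions for `χ`, and the two
leftover monomials are mutually inverse. At `k = l − 2` the monomials of `χ(l,0)` run once around
the cycle of indices, so `Y_{2l} = Y_0` turns `χ(l,0)` into `Z + χ(l−2,2)`.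
-/

open Finset

section

variable (l : ℕ)

lemma Y_mul_Y (n e e' : ℤ) : Y l n e * Y l n e' = Y l n (e + e') := by
  simp only [Y, AddMonoidAlgebra.single_mul_single, Finsupp.single_add, mul_one]

lemma Y_exp_zero (n : ℤ) : Y l n 0 = 1 := by
  simp only [Y, Finsupp.single_zero]
  rfl

lemma Y_add_two_mul_self (n e : ℤ) : Y l (n + 2 * l) e = Y l n e := by
  rw [Y, Y, mul_comm, Int.add_mul_ediv_right _ _ two_ne_zero, Int.cast_add, Int.cast_natCast,
    ZMod.natCast_self, add_zero]

noncomputable def Yprod (a : ℤ) (k : ℕ) (e : ℤ) : Rl l := ∏ t ∈ range k, Y l (a + 2 * t) e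

lemma Yprod_mul_Yprod (a : ℤ) (k : ℕ) (e e' : ℤ) :
    Yprod l a k e * Yprod l a k e' = Yprod l a k (e + e') := by
  simp only [Yprod, ← prod_mul_distrib, Y_mul_Y]

lemma Yprod_exp_zero (a : ℤ) (k : ℕ) : Yprod l a k 0 = 1 := by
  simp only [Yprod, Y_exp_zero, prod_const_one]

lemma Yprod_succ (a : ℤ) (k : ℕ) (e : ℤ) :
    Yprod l a (k + 1) e = Yprod l a k e * Y l (a + 2 * k) e :=
  prod_range_succ _ _

lemma Yprod_succ' (a : ℤ) (k : ℕ) (e : ℤ) :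
    Yprod l a (k + 1) e = Y l a e * Yprod l (a + 2) k e := by
  rw [Yprod, prod_range_succ', mul_comm]
  congr 1
  · simp
  · refine prod_congr rfl fun t _ => ?_
    congr 1
    push_cast
    ring

lemma Yprod_add_two_self (a : ℤ) (e : ℤ) : Yprod l (a + 2) l e = Yprod l a l e := by
  rcases l with _ | k
  · rfl
  · rw [Yprod_succ, Yprod_succ', mul_comm, add_assoc, ← mul_one_add, add_comm 1,
      ← Nat.cast_succ, Y_add_two_mul_self]

lemma chi_eq_sum_antidiagonal (k : ℕ) (a : ℤ) :
    chi l k a = ∑ p ∈ antidiagonal k, Yprod l a p.1 1 * Yprod l (a + 2 * (p.1 + 1)) p.2 (-1) := by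
  rw [← Nat.sum_antidiagonal_swap, Nat.sum_antidiagonal_eq_sum_range_succ_mk, chi]
  refine sum_congr rfl fun i hi => ?_
  have hik : i ≤ k := Nat.lt_succ_iff.mp (mem_range.mp hi)
  rw [← Ico_add_one_right_eq_Icc, prod_Ico_eq_prod_range, Yprod, Yprod]
  simp only [Prod.swap]
  congr 1
  rw [show k + 1 - (k + 1 - i) = i by omega]
  refine prod_congr rfl fun t _ => ?_
  congr 1
  push_cast [Nat.cast_sub hik, Nat.cast_sub (show i ≤ k + 1 by omega)]
  ring

lemma chi_succ_eq_Y_mul_chi_add (k : ℕ) (a : ℤ) :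
    chi l (k + 1) a = Y l a 1 * chi l k (a + 2) + Yprod l (a + 2) (k + 1) (-1) := by
  rw [chi_eq_sum_antidiagonal, chi_eq_sum_antidiagonal, Nat.sum_antidiagonal_succ, mul_sum,
    add_comm]
  congr 1
  · refine sum_congr rfl fun p _ => ?_
    rw [Yprod_succ', mul_assoc]
    congr 3
    push_cast
    ring
  · simp [Yprod]

lemma chi_succ_eq_Y_inv_mul_chi_add (k : ℕ) (a : ℤ) :
    chi l (k + 1) a = Y l (a + 2 * (k + 1)) (-1) * chi l k a + Yprod l a (k + 1) 1 := by
  rw [chi_eq_sum_antidiagonal, chi_eq_sum_antidiagonal, Nat.sum_antidiagonal_succ', mul_sum,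
    add_comm]
  congr 1
  · refine sum_congr rfl fun p hp => ?_
    rw [Yprod_succ, ← mem_antidiagonal.mp hp]
    push_cast
    ring_nf
  · simp [Yprod]

lemma chi_mul_chi_add_two (k : ℕ) (a : ℤ) :
    chi l (k + 1) a * chi l (k + 1) (a + 2) = chi l (k + 2) a * chi l k (a + 2) + 1 := by
  have hleft := chi_succ_eq_Y_mul_chi_add l k a
  have hleft_succ := chi_succ_eq_Y_mul_chi_add l (k + 1) a
  have hright := chi_succ_eq_Y_inv_mul_chi_add l k (a + 2)
  have hcancel : Yprod l (a + 2) (k + 1) (-1) * Yprod l (a + 2) (k + 1) 1 = 1 := by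
    rw [Yprod_mul_Yprod, neg_add_cancel, Yprod_exp_zero]
  rw [Yprod_succ, Nat.cast_succ] at hleft_succ
  rw [hleft, hleft_succ, hright]
  linear_combination hcancel

end

lemma chi_self_eq_Z_add (m : ℕ) : chi (m + 2) (m + 2) 0 = Z (m + 2) + chi (m + 2) m 2 := by
  have hY0 : Y (m + 2) (2 + 2 * ((m : ℤ) + 1)) (-1) = Y (m + 2) 0 (-1) := by
    rw [← Y_add_two_mul_self (m + 2) 0]
    congr 1
    push_cast
    ring
  have hZ : Z (m + 2) = Yprod (m + 2) 0 (m + 2) 1 + Yprod (m + 2) 0 (m + 2) (-1) := by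
    simp only [Z, Yprod, zero_add]
  have hshift : Yprod (m + 2) 2 (m + 1 + 1) (-1) = Yprod (m + 2) 0 (m + 2) (-1) := by
    simpa using Yprod_add_two_self (m + 2) 0 (-1)
  have hcancel : Y (m + 2) 0 1 * Y (m + 2) 0 (-1) = 1 := by
    rw [Y_mul_Y, add_neg_cancel, Y_exp_zero]
  rw [chi_succ_eq_Y_mul_chi_add, chi_succ_eq_Y_inv_mul_chi_add, zero_add, hshift, hY0, hZ,
    Yprod_succ' _ 0 (m + 1) 1, zero_add]
  linear_combination chi (m + 2) m 2 * hcancel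

/-- Lemma 2.6 (generalised exchange relation):
`χ(l−1,0)·χ(l−1,2) = χ(l−2,2)·Z + 1 + χ(l−2,2)²`. -/
theorem generalized_exchange (l : ℕ) (hl : 2 ≤ l) :
    chi l (l - 1) 0 * chi l (l - 1) 2 =
      chi l (l - 2) 2 * Z l + 1 + chi l (l - 2) 2 ^ 2 := by
  obtain ⟨m, rfl⟩ : ∃ m, l = m + 2 := ⟨l - 2, by omega⟩
  rw [show m + 2 - 1 = m + 1 by omega, Nat.add_sub_cancel]
  have htsystem := chi_mul_chi_add_two (m + 2) m 0
  rw [zero_add, chi_self_eq_Z_add] at htsystem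
  linear_combination htsystem
end

section
/- For every integer k with 0 ≤ k ≤ l−2, the following identity holds in R_l: χ(l−1,0)·χ(l−1,2k+2) = χ(k,0)² + χ(l−2−k,2k+2)² + Z·χ(k,0)·χ(l−2−k,2k+2). (This is the generalised exchange relation (2) of Proposition 3.1, relating the ε-characters of the two Kirillov–Reshetikhin modules corresponding to a pair of diameters of the 2l-gon, expressed through the isomorphism of Theorem 4.1.) -/
/-!
Put `x n = Y_{2n}` and `p n = x 0 ⋯ x (n-1)`. The `j`-th summand of `χ(k, 2m)` (read backwards)
is `p (m+j) p (m+j+1) / (p m · p (m+k+1))`, so up to a unit every character is a window sum of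
`q j = p j · p (j+1)`. Periodicity of `x` gives `p (n+l) = p n · F` with `F = p l`, hence
`q (j+l) = F² q j`. Splitting the window `[0, l)` at `k+1` into the sums `A` and `B`, the
exchange relation multiplied by `p (k+1)² F²` becomes
`(A + B)(B + F² A) = F² A² + B² + (F² + 1) A B`.
-/

open Finset Function

section UnitSequence

variable {R : Type*} [CommRing R] (x : ℕ → Rˣ)

/-- `χ(k, 2m)` with `Y_{2n}` replaced by the unit `x n`. -/
noncomputable def chiSeq (k m : ℕ) : R :=
  ∑ i ∈ range (k + 1),
    (((∏ t ∈ range (k - i), x (m + t)) *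
      ∏ t ∈ Icc (k + 1 - i) k, (x (m + t))⁻¹ : Rˣ) : R)

def prefixProd (n : ℕ) : Rˣ := ∏ t ∈ range n, x t

lemma chiSeq_mul_prod_range (k m : ℕ) :
    chiSeq x k m * ((∏ t ∈ range (k + 1), x (m + t) : Rˣ) : R) =
      ∑ j ∈ range (k + 1),
        (((∏ t ∈ range j, x (m + t)) * ∏ t ∈ range (j + 1), x (m + t) : Rˣ) : R) := by
  rw [chiSeq, sum_mul, ← sum_range_reflect]
  refine sum_congr rfl fun j hj => ?_
  have hj : j + 1 ≤ k + 1 := mem_range.mp hj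
  rw [show k - (k + 1 - 1 - j) = j by omega, show k + 1 - (k + 1 - 1 - j) = j + 1 by omega,
    ← prod_range_mul_prod_Ico _ hj, Ico_add_one_right_eq_Icc, prod_inv_distrib, ← Units.val_mul,
    mul_mul_mul_comm, inv_mul_cancel, mul_one]

lemma chiSeq_mul_prefixProd (k m : ℕ) :
    chiSeq x k m * ((prefixProd x m * prefixProd x (m + k + 1) : Rˣ) : R) =
      ∑ j ∈ range (k + 1), ((prefixProd x (m + j) * prefixProd x (m + j + 1) : Rˣ) : R) := by
  have hshift (s : ℕ) : prefixProd x (m + s) = prefixProd x m * ∏ t ∈ range s, x (m + t) :=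
    prod_range_add _ _ _
  calc chiSeq x k m * ((prefixProd x m * prefixProd x (m + k + 1) : Rˣ) : R)
      = (chiSeq x k m * ((∏ t ∈ range (k + 1), x (m + t) : Rˣ) : R)) *
          ((prefixProd x m * prefixProd x m : Rˣ) : R) := by
        rw [add_assoc, hshift]; push_cast; ring
    _ = _ := by
        rw [chiSeq_mul_prod_range, sum_mul]
        refine sum_congr rfl fun j _ => ?_
        rw [add_assoc, hshift, hshift]; push_cast; ring

variable {x}

lemma prefixProd_add_period {l : ℕ} (hx : Periodic x l) (n : ℕ) :
    prefixProd x (n + l) = prefixProd x n * prefixProd x l := by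
  rw [add_comm, prefixProd, prod_range_add, mul_comm]
  congr 1
  exact prod_congr rfl fun t _ => by rw [add_comm, hx]

lemma prefixProd_mul_succ_add_period {l : ℕ} (hx : Periodic x l) (j : ℕ) :
    prefixProd x (j + l) * prefixProd x (j + l + 1) =
      prefixProd x j * prefixProd x (j + 1) * (prefixProd x l * prefixProd x l) := by
  rw [add_right_comm, prefixProd_add_period hx, prefixProd_add_period hx, mul_mul_mul_comm]

theorem chiSeq_exchange {k d : ℕ} (hx : Periodic x (k + d + 2)) :
    chiSeq x (k + d + 1) 0 * chiSeq x (k + d + 1) (k + 1) =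
      chiSeq x k 0 ^ 2 + chiSeq x d (k + 1) ^ 2 +
        (((prefixProd x (k + d + 2) : Rˣ) : R) + ((prefixProd x (k + d + 2))⁻¹ : Rˣ)) *
          chiSeq x k 0 * chiSeq x d (k + 1) := by
  set F := prefixProd x (k + d + 2)
  set P := prefixProd x (k + 1)
  have hp0 : prefixProd x 0 = 1 := prod_range_zero _
  have hA : chiSeq x k 0 * P =
      ∑ j ∈ range (k + 1), ((prefixProd x j * prefixProd x (j + 1) : Rˣ) : R) := by
    simpa [hp0] using chiSeq_mul_prefixProd x k 0
  have hB : chiSeq x d (k + 1) * (P * F : Rˣ) =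
      ∑ j ∈ range (d + 1),
        ((prefixProd x (k + 1 + j) * prefixProd x (k + 1 + j + 1) : Rˣ) : R) := by
    simpa [F, show k + 1 + d + 1 = k + d + 2 by omega] using chiSeq_mul_prefixProd x d (k + 1)
  have h1 : chiSeq x (k + d + 1) 0 * F =
      chiSeq x k 0 * P + chiSeq x d (k + 1) * (P * F : Rˣ) := by
    rw [hA, hB, ← sum_range_add]
    simpa [hp0, F, show k + d + 1 + 1 = k + 1 + (d + 1) by omega] using
      chiSeq_mul_prefixProd x (k + d + 1) 0
  have h2 : chiSeq x (k + d + 1) (k + 1) * (P * P * F : Rˣ) =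
      chiSeq x d (k + 1) * (P * F : Rˣ) + (F * F : Rˣ) * (chiSeq x k 0 * P) := by
    have h := chiSeq_mul_prefixProd x (k + d + 1) (k + 1)
    rw [show range (k + d + 1 + 1) = range (d + 1 + (k + 1)) by congr 1; omega,
      sum_range_add, show k + 1 + (k + d + 1) + 1 = k + 1 + (k + d + 2) by omega,
      prefixProd_add_period hx] at h
    rw [mul_assoc P P F, h, hB, hA, mul_sum]
    congr 1
    refine sum_congr rfl fun j _ => ?_
    rw [show k + 1 + (d + 1 + j) = j + (k + d + 2) by omega, prefixProd_mul_succ_add_period hx]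
    push_cast
    ring
  have hF : (F : R) * (F⁻¹ : Rˣ) = 1 := F.mul_inv
  refine (Units.isUnit (P * P * F * F)).mul_left_inj.mp ?_
  push_cast at h1 h2 ⊢
  linear_combination (chiSeq x (k + d + 1) (k + 1) * P * P * F) * h1 +
    (chiSeq x k 0 * P + chiSeq x d (k + 1) * P * F) * h2 -
    chiSeq x k 0 * chiSeq x d (k + 1) * P ^ 2 * F * hF

end UnitSequence

lemma Y_mul_Y_neg_one (l : ℕ) (n : ℤ) : Y l n 1 * Y l n (-1) = 1 := by
  rw [Y, Y, AddMonoidAlgebra.single_mul_single, ← Finsupp.single_add]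
  simp [AddMonoidAlgebra.one_def]

noncomputable def yUnit (l t : ℕ) : (Rl l)ˣ :=
  ⟨Y l (2 * t) 1, Y l (2 * t) (-1), Y_mul_Y_neg_one l _, by rw [mul_comm, Y_mul_Y_neg_one]⟩

lemma Y_two_mul (l : ℕ) (n e : ℤ) :
    Y l (2 * n) e = AddMonoidAlgebra.single (Finsupp.single (n : ZMod l) e) 1 := by
  rw [Y, Int.mul_ediv_cancel_left _ two_ne_zero]

lemma yUnit_periodic (l : ℕ) : Periodic (yUnit l) l := fun t => by
  ext1
  simp [yUnit, Y_two_mul]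

lemma chi_two_mul_eq_chiSeq (l k m : ℕ) : chi l k (2 * m) = chiSeq (yUnit l) k m := by
  simp [chi, chiSeq, yUnit, Units.coe_prod, mul_add]

lemma Z_eq_prefixProd_add_inv (l : ℕ) :
    Z l = ((prefixProd (yUnit l) l : (Rl l)ˣ) : Rl l) +
      ((prefixProd (yUnit l) l)⁻¹ : (Rl l)ˣ) := by
  rw [Z, prefixProd, ← prod_inv_distrib, Units.coe_prod, Units.coe_prod]
  rfl

/-- The generalised exchange relation (2) of Proposition 3.1: for `0 ≤ k ≤ l−2`,
`χ(l−1,0)·χ(l−1,2k+2) = χ(k,0)² + χ(l−2−k,2k+2)² + Z·χ(k,0)·χ(l−2−k,2k+2)`. -/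
theorem diameter_exchange (l : ℕ) (hl : 2 ≤ l) (k : ℕ) (hk : k ≤ l - 2) :
    chi l (l - 1) 0 * chi l (l - 1) (2 * (k : ℤ) + 2) =
      chi l k 0 ^ 2 + chi l (l - 2 - k) (2 * (k : ℤ) + 2) ^ 2 +
        Z l * chi l k 0 * chi l (l - 2 - k) (2 * (k : ℤ) + 2) := by
  obtain ⟨d, rfl⟩ : ∃ d, l = k + d + 2 := ⟨l - 2 - k, by omega⟩
  have h0 : (0 : ℤ) = 2 * ((0 : ℕ) : ℤ) := by simp
  have hk1 : 2 * (k : ℤ) + 2 = 2 * ((k + 1 : ℕ) : ℤ) := by push_cast; ring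
  rw [show k + d + 2 - 1 = k + d + 1 by omega, show k + d + 2 - 2 - k = d by omega, h0, hk1]
  simp only [chi_two_mul_eq_chiSeq, Z_eq_prefixProd_add_inv]
  exact chiSeq_exchange (yUnit_periodic _)
end
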